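/- arXiv:1407.1361 — 3 statements merged into one kernel-verified Lean document; each statement's English description precedes it below -/
import Mathlib

section
/- Let Q = [[a, b], [c, d]] be an invertible 2 × 2 complex matrix with d ≠ 0 and c = −a·conj(b)/conj(d). Define A_{ij} = |Q_{ij}| and B_{ij} = |(Q⁻¹)_{ij}|. Then for all indices k, l ∈ {1, 2}: ∑_{j=1}^{2} A_{k,j} · B_{j,l} ≤ 1. -/
/-!
The hypothesis on `c` says exactly that the two columns of `Q` are orthogonal. For any invertible
`Q` with orthogonal columns, `Q⁻¹ = N⁻¹ Qᴴ` where `N` is the diagonal matrix of squared column norms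
`s j`, so `∑ j, |Q k j| |Q⁻¹ j l| = ∑ j, |Q k j| |Q l j| / s j`. Reading `Q Q⁻¹ = 1` on the diagonal
gives `∑ j, |Q k j|² / s j = 1` for every row `k`, and AM-GM bounds the sum by the average of these
two row identities, which is `1`.
-/

open Matrix Finset

namespace Matrix

variable {𝕜 n : Type*} [RCLike 𝕜] [Fintype n]

theorem conjTranspose_mul_self_apply_self (Q : Matrix n n 𝕜) (j : n) :
    (Qᴴ * Q) j j = ((∑ i, ‖Q i j‖ ^ 2 : ℝ) : 𝕜) := by
  simp [mul_apply, RCLike.conj_mul]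

variable [DecidableEq n] {Q : Matrix n n 𝕜}

theorem conjTranspose_mul_self_apply_self_ne_zero (hQ : (Qᴴ * Q).IsDiag) (hdet : IsUnit Q.det)
    (j : n) : (Qᴴ * Q) j j ≠ 0 := by
  have hne : (Qᴴ * Q).det ≠ 0 := by
    rw [det_mul, det_conjTranspose]
    exact mul_ne_zero (star_ne_zero.2 hdet.ne_zero) hdet.ne_zero
  rw [← hQ.diagonal_diag, det_diagonal] at hne
  exact prod_ne_zero_iff.1 hne j (mem_univ j)

theorem inv_eq_diagonal_mul_conjTranspose (hQ : (Qᴴ * Q).IsDiag) (hdet : IsUnit Q.det) :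
    Q⁻¹ = diagonal (fun j => ((Qᴴ * Q) j j)⁻¹) * Qᴴ := by
  refine inv_eq_left_inv ?_
  rw [Matrix.mul_assoc, ← hQ.diagonal_diag, diagonal_mul_diagonal, ← diagonal_one]
  refine congrArg diagonal (funext fun j => ?_)
  rw [diagonal_apply_eq, diag_apply]
  exact inv_mul_cancel₀ (conjTranspose_mul_self_apply_self_ne_zero hQ hdet j)

theorem sum_norm_mul_norm_inv_le_one_of_isDiag (hQ : (Qᴴ * Q).IsDiag) (hdet : IsUnit Q.det) (k l : n) :
    ∑ j, ‖Q k j‖ * ‖Q⁻¹ j l‖ ≤ 1 := by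
  set s : n → ℝ := fun j => ∑ i, ‖Q i j‖ ^ 2
  have hs : ∀ j, 0 ≤ s j := fun j => by positivity
  have hinv : ∀ j l, Q⁻¹ j l = ((s j)⁻¹ : ℝ) * star (Q l j) := fun j l => by
    rw [inv_eq_diagonal_mul_conjTranspose hQ hdet, diagonal_mul, conjTranspose_apply,
      conjTranspose_mul_self_apply_self, RCLike.ofReal_inv]
  have hrow : ∀ k, ∑ j, ‖Q k j‖ ^ 2 / s j = 1 := fun k => by
    have hkk := congr_fun₂ (mul_nonsing_inv Q hdet) k k
    simp only [mul_apply, hinv, one_apply_eq] at hkk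
    have hcast : ((∑ j, ‖Q k j‖ ^ 2 / s j : ℝ) : 𝕜) = 1 := by
      rw [← hkk, RCLike.ofReal_sum]
      refine sum_congr rfl fun j _ => ?_
      rw [RCLike.ofReal_div, RCLike.ofReal_pow, RCLike.ofReal_inv, ← RCLike.mul_conj,
        ← RCLike.star_def]
      ring
    exact_mod_cast hcast
  calc ∑ j, ‖Q k j‖ * ‖Q⁻¹ j l‖
      = ∑ j, 2 * ‖Q k j‖ * ‖Q l j‖ / s j / 2 := by
        refine sum_congr rfl fun j _ => ?_
        rw [hinv, norm_mul, RCLike.norm_ofReal, abs_inv, abs_of_nonneg (hs j), norm_star]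
        ring
    _ ≤ ∑ j, (‖Q k j‖ ^ 2 + ‖Q l j‖ ^ 2) / s j / 2 := by
        gcongr with j
        exact two_mul_le_add_sq _ _
    _ = 1 := by
        simp only [add_div, sum_add_distrib, ← sum_div, hrow]
        norm_num

theorem isDiag_conjTranspose_mul_self_fin_two {a b c d : 𝕜} (h : star a * b + star c * d = 0) :
    (!![a, b; c, d]ᴴ * !![a, b; c, d]).IsDiag := by
  have h' : star b * a + star d * c = 0 := by
    simpa [mul_comm] using congrArg star h
  intro i j hij
  fin_cases i <;> fin_cases j <;> simp_all [mul_apply]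

end Matrix

/-- Property `(I)` (Lemma 4 of the paper): if `Q = !![a, b; c, d]` is an
invertible `2 × 2` complex matrix with `c = -a * conj b / conj d`, then with
`A i j = |Q i j|` and `B i j = |Q⁻¹ i j|`, for all `k, l` we have
`∑ j, A k j * B j l ≤ 1`. -/
theorem property_I_of_qubit_solution
    (a b c d : ℂ) (hd : d ≠ 0)
    (hc : c = -a * (starRingEnd ℂ) b / (starRingEnd ℂ) d)
    (Q : Matrix (Fin 2) (Fin 2) ℂ) (hQ : Q = !![a, b; c, d])
    (hinv : IsUnit Q.det)
    (k l : Fin 2) :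
    ∑ j : Fin 2, ‖Q k j‖ * ‖Q⁻¹ j l‖ ≤ 1 := by
  have horth : star a * b + star c * d = 0 := by
    rw [hc]
    simp only [star_div₀, star_mul, star_neg, Complex.star_def, Complex.conj_conj]
    field_simp
    ring
  subst hQ
  exact sum_norm_mul_norm_inv_le_one_of_isDiag
    (isDiag_conjTranspose_mul_self_fin_two horth) hinv k l
end

section
/- Let Q = [[a, b], [c, d]] be an invertible 2 × 2 complex matrix with d ≠ 0, c = −a·conj(b)/conj(d), and |a| = |d|. Define A_{ij} = |Q_{ij}| and B_{ij} = |(Q⁻¹)_{ij}|. Then for every permutation π of {1, 2} and all indices k, l ∈ {1, 2}: ∑_{j=1}^{2} A_{k,π(j)} · B_{j,l} ≤ 1. -/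
/-!
The hypotheses say exactly that the two rows of `Q` are orthogonal and of the same length, i.e.
`Q Qᴴ = r • 1` with `r = |b|² + |d|² > 0`. Then `Q⁻¹ = r⁻¹ Qᴴ`, so `|(Q⁻¹)ⱼₗ| = r⁻¹ |Qₗⱼ|`, and by
Cauchy–Schwarz `∑ⱼ |Q_{k,π j}| |Q_{l,j}|` is at most the product of two row lengths, which is `r`.
The same argument gives property `(G)` for every `G` and every scalar multiple of a unitary matrix.
-/

open Matrix Finset

namespace Matrix

variable {𝕜 n : Type*} [RCLike 𝕜] [Fintype n] [DecidableEq n]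

theorem sum_norm_sq_of_mul_conjTranspose_eq_smul_one {Q : Matrix n n 𝕜} {r : ℝ}
    (hQ : Q * Qᴴ = (r : 𝕜) • 1) (k : n) : ∑ j, ‖Q k j‖ ^ 2 = r := by
  have hkk := congr_fun (congr_fun hQ k) k
  simp only [mul_apply, conjTranspose_apply, RCLike.star_def, RCLike.mul_conj, smul_apply,
    one_apply_eq, smul_eq_mul, mul_one] at hkk
  exact_mod_cast hkk

theorem inv_eq_smul_conjTranspose_of_mul_conjTranspose_eq_smul_one {Q : Matrix n n 𝕜} {r : ℝ}
    (hQ : Q * Qᴴ = (r : 𝕜) • 1) (hr : r ≠ 0) : Q⁻¹ = (r : 𝕜)⁻¹ • Qᴴ := by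
  refine inv_eq_right_inv ?_
  rw [mul_smul_comm, hQ, smul_smul, inv_mul_cancel₀ (by exact_mod_cast hr), one_smul]

theorem sum_norm_perm_mul_norm_inv_le_one {Q : Matrix n n 𝕜} {r : ℝ}
    (hQ : Q * Qᴴ = (r : 𝕜) • 1) (hr : 0 < r) (π : Equiv.Perm n) (k l : n) :
    ∑ j, ‖Q k (π j)‖ * ‖Q⁻¹ j l‖ ≤ 1 := by
  have hrow := sum_norm_sq_of_mul_conjTranspose_eq_smul_one hQ
  have hrow_perm : ∑ j, ‖Q k (π j)‖ ^ 2 = r :=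
    (Equiv.sum_comp π fun j ↦ ‖Q k j‖ ^ 2).trans (hrow k)
  have hinv_apply (j : n) : ‖Q⁻¹ j l‖ = r⁻¹ * ‖Q l j‖ := by
    rw [inv_eq_smul_conjTranspose_of_mul_conjTranspose_eq_smul_one hQ hr.ne', smul_apply,
      conjTranspose_apply, smul_eq_mul, norm_mul, norm_star, norm_inv, RCLike.norm_ofReal,
      abs_of_pos hr]
  calc ∑ j, ‖Q k (π j)‖ * ‖Q⁻¹ j l‖ = r⁻¹ * ∑ j, ‖Q k (π j)‖ * ‖Q l j‖ := by
        simp only [hinv_apply, mul_sum, mul_left_comm]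
    _ ≤ r⁻¹ * (√(∑ j, ‖Q k (π j)‖ ^ 2) * √(∑ j, ‖Q l j‖ ^ 2)) := by
        gcongr; exact Real.sum_mul_le_sqrt_mul_sqrt _ _ _
    _ = 1 := by rw [hrow_perm, hrow, Real.mul_self_sqrt hr.le, inv_mul_cancel₀ hr.ne']

end Matrix

theorem mul_conjTranspose_eq_smul_one_of_qubit_solution {a b c d : ℂ} (hd : d ≠ 0)
    (hc : c = -a * (starRingEnd ℂ) b / (starRingEnd ℂ) d) (habs : ‖a‖ = ‖d‖) :
    !![a, b; c, d] * (!![a, b; c, d])ᴴ = ((‖b‖ ^ 2 + ‖d‖ ^ 2 : ℝ) : ℂ) • 1 := by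
  have hnorm_c : ‖c‖ = ‖b‖ := by
    rw [hc, norm_div, norm_mul, norm_neg, Complex.norm_conj, Complex.norm_conj, habs,
      mul_div_cancel_left₀ _ (norm_ne_zero_iff.mpr hd)]
  have horth : a * (starRingEnd ℂ) c + b * (starRingEnd ℂ) d = 0 := by
    have haa : a * (starRingEnd ℂ) a = d * (starRingEnd ℂ) d := by
      simp only [Complex.mul_conj, Complex.normSq_eq_norm_sq, habs]
    rw [hc, map_div₀, map_mul, map_neg, Complex.conj_conj, Complex.conj_conj]
    field_simp
    linear_combination -b * haa
  have horth' : c * (starRingEnd ℂ) a + d * (starRingEnd ℂ) b = 0 := by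
    simpa [mul_comm] using congr_arg (starRingEnd ℂ) horth
  ext i j
  fin_cases i <;> fin_cases j <;>
    simp [mul_apply, Fin.sum_univ_two, Complex.mul_conj, Complex.normSq_eq_norm_sq, habs, hnorm_c,
      horth, horth', add_comm]

theorem property_S2_of_qubit_solution_general
    (a b c d : ℂ) (hd : d ≠ 0)
    (hc : c = -a * (starRingEnd ℂ) b / (starRingEnd ℂ) d)
    (habs : ‖a‖ = ‖d‖)
    (Q : Matrix (Fin 2) (Fin 2) ℂ) (hQ : Q = !![a, b; c, d])
    (π : Equiv.Perm (Fin 2)) (k l : Fin 2) :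
    ∑ j : Fin 2, ‖Q k (π j)‖ * ‖Q⁻¹ j l‖ ≤ 1 := by
  subst hQ
  have hr : 0 < ‖b‖ ^ 2 + ‖d‖ ^ 2 := by positivity
  exact sum_norm_perm_mul_norm_inv_le_one
    (mul_conjTranspose_eq_smul_one_of_qubit_solution hd hc habs) hr π k l

/-- Property `(S₂)` (Lemma 5 of the paper): if `Q = !![a, b; c, d]` is an
invertible `2 × 2` complex matrix with `c = -a * conj b / conj d` and
`|a| = |d|`, then with `A i j = |Q i j|` and `B i j = |Q⁻¹ i j|`, for every
permutation `π` of `{1, 2}` and all `k, l` we have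
`∑ j, A k (π j) * B j l ≤ 1`. -/
theorem property_S2_of_qubit_solution
    (a b c d : ℂ) (hd : d ≠ 0)
    (hc : c = -a * (starRingEnd ℂ) b / (starRingEnd ℂ) d)
    (habs : ‖a‖ = ‖d‖)
    (Q : Matrix (Fin 2) (Fin 2) ℂ) (hQ : Q = !![a, b; c, d])
    (hinv : IsUnit Q.det)
    (π : Equiv.Perm (Fin 2)) (k l : Fin 2) :
    ∑ j : Fin 2, ‖Q k (π j)‖ * ‖Q⁻¹ j l‖ ≤ 1 :=
  property_S2_of_qubit_solution_general a b c d hd hc habs Q hQ π k l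
end

section
/- Let V = ℂ^d, let A and B be unitary operators on V, and let T be the swap operator on V ⊗ V. Then the operator T ∘ (A ⊗ B) on V ⊗ V satisfies the Yang-Baxter equation (R ⊗ I)(I ⊗ R)(R ⊗ I) = (I ⊗ R)(R ⊗ I)(I ⊗ R) if and only if A and B commute: A ∘ B = B ∘ A. -/
open Matrix

/-- The swap operator `T` on `V ⊗ V`, `T (a ⊗ b) = b ⊗ a`. -/
def swapOp (d : ℕ) : Matrix (Fin d × Fin d) (Fin d × Fin d) ℂ :=
  fun p q => if p.1 = q.2 ∧ p.2 = q.1 then 1 else 0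

/-- The tensor product `A ⊗ B` of two operators on `V`, as an operator on `V ⊗ V`. -/
def tensorOp {d : ℕ} (A B : Matrix (Fin d) (Fin d) ℂ) :
    Matrix (Fin d × Fin d) (Fin d × Fin d) ℂ :=
  fun p q => A p.1 q.1 * B p.2 q.2

/-- For an operator `R` on `V ⊗ V`, the operator `R ⊗ I` on `V ⊗ V ⊗ V`. -/
def op12 {d : ℕ} (R : Matrix (Fin d × Fin d) (Fin d × Fin d) ℂ) :
    Matrix (Fin d × Fin d × Fin d) (Fin d × Fin d × Fin d) ℂ :=
  fun p q => R (p.1, p.2.1) (q.1, q.2.1) * (if p.2.2 = q.2.2 then 1 else 0)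

/-- For an operator `R` on `V ⊗ V`, the operator `I ⊗ R` on `V ⊗ V ⊗ V`. -/
def op23 {d : ℕ} (R : Matrix (Fin d × Fin d) (Fin d × Fin d) ℂ) :
    Matrix (Fin d × Fin d × Fin d) (Fin d × Fin d × Fin d) ℂ :=
  fun p q => (if p.1 = q.1 then 1 else 0) * R (p.2.1, p.2.2) (q.2.1, q.2.2)

/-- `R` satisfies the (constant quantum) Yang-Baxter equation:
`(R ⊗ I)(I ⊗ R)(R ⊗ I) = (I ⊗ R)(R ⊗ I)(I ⊗ R)` on `V ⊗ V ⊗ V`. -/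
def YangBaxter {d : ℕ} (R : Matrix (Fin d × Fin d) (Fin d × Fin d) ℂ) : Prop :=
  op12 R * op23 R * op12 R = op23 R * op12 R * op23 R


lemma Rap {d : ℕ} (A B : Matrix (Fin d) (Fin d) ℂ) (p q : Fin d × Fin d) :
    (swapOp d * tensorOp A B) p q = A p.2 q.1 * B p.1 q.2 := by
  simp [swapOp, tensorOp, Matrix.mul_apply, Fintype.sum_prod_type, ite_and]

lemma lhs_entry {d : ℕ} (A B : Matrix (Fin d) (Fin d) ℂ) (p q : Fin d × Fin d × Fin d) :
    (op12 (swapOp d * tensorOp A B) * op23 (swapOp d * tensorOp A B) *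
      op12 (swapOp d * tensorOp A B)) p q =
    (A * A) p.2.2 q.1 * ((A * B) p.2.1 q.2.1 * (B * B) p.1 q.2.2) := by
  set R := swapOp d * tensorOp A B with hR
  have hRap : ∀ p q : Fin d × Fin d, R p q = A p.2 q.1 * B p.1 q.2 := fun p q => Rap A B p q
  simp only [Matrix.mul_apply, op12, op23, hRap, Fintype.sum_prod_type, mul_ite, ite_mul,
    one_mul, mul_one, zero_mul, mul_zero, Finset.sum_ite_eq, Finset.sum_ite_eq',
    Finset.mem_univ, if_true]
  simp only [Finset.sum_ite_irrel, Finset.sum_ite_eq, Finset.sum_ite_eq', Finset.mem_univ,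
    if_true]
  simp only [Finset.sum_const_zero, Finset.sum_ite_eq', Finset.mem_univ, if_true]
  simp only [Finset.sum_mul, Finset.mul_sum]
  have rot : ∀ f : Fin d → Fin d → Fin d → ℂ,
      (∑ a, ∑ b, ∑ c, f a b c) = ∑ c, ∑ a, ∑ b, f a b c := by
    intro f
    have h1 : ∀ a, (∑ b, ∑ c, f a b c) = ∑ c, ∑ b, f a b c := fun a => Finset.sum_comm
    simp_rw [h1]
    exact Finset.sum_comm
  rw [rot]
  refine Finset.sum_congr rfl fun x1 _ => ?_
  refine Finset.sum_congr rfl fun x _ => ?_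
  refine Finset.sum_congr rfl fun x3 _ => ?_
  ring

lemma rhs_entry {d : ℕ} (A B : Matrix (Fin d) (Fin d) ℂ) (p q : Fin d × Fin d × Fin d) :
    (op23 (swapOp d * tensorOp A B) * op12 (swapOp d * tensorOp A B) *
      op23 (swapOp d * tensorOp A B)) p q =
    (A * A) p.2.2 q.1 * ((B * A) p.2.1 q.2.1 * (B * B) p.1 q.2.2) := by
  set R := swapOp d * tensorOp A B with hR
  have hRap : ∀ p q : Fin d × Fin d, R p q = A p.2 q.1 * B p.1 q.2 := fun p q => Rap A B p q
  simp only [Matrix.mul_apply, op12, op23, hRap, Fintype.sum_prod_type, mul_ite, ite_mul,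
    one_mul, mul_one, zero_mul, mul_zero, Finset.sum_ite_eq, Finset.sum_ite_eq',
    Finset.mem_univ, if_true]
  simp only [Finset.sum_ite_irrel, Finset.sum_ite_eq, Finset.sum_ite_eq', Finset.mem_univ,
    if_true]
  simp only [Finset.sum_const_zero, Finset.sum_ite_eq', Finset.mem_univ, if_true]
  simp only [Finset.sum_ite_eq, Finset.mem_univ, if_true]
  simp only [Finset.sum_mul, Finset.mul_sum]
  refine Finset.sum_congr rfl fun x1 _ => ?_
  refine Finset.sum_congr rfl fun x _ => ?_
  refine Finset.sum_congr rfl fun x3 _ => ?_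
  ring

lemma exists_ne_zero_row {d : ℕ} (M : Matrix (Fin d) (Fin d) ℂ)
    (hM : M ∈ Matrix.unitaryGroup (Fin d) ℂ) (k : Fin d) : ∃ a, M k a ≠ 0 := by
  by_contra hc
  push_neg at hc
  have h1 : (M * star M) k k = 1 := by
    rw [(Matrix.mem_unitaryGroup_iff).1 hM]
    simp [Matrix.one_apply]
  rw [Matrix.mul_apply] at h1
  simp only [Matrix.star_apply] at h1
  simp [hc] at h1


/-- For unitary `A, B` on `V`, the operator `T ∘ (A ⊗ B)` satisfies the Yang-Baxter
equation if and only if `A` and `B` commute. -/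
theorem swap_comp_tensor_yangBaxter_iff_commute
    (d : ℕ) (A B : Matrix (Fin d) (Fin d) ℂ)
    (hA : A ∈ Matrix.unitaryGroup (Fin d) ℂ)
    (hB : B ∈ Matrix.unitaryGroup (Fin d) ℂ) :
    YangBaxter (swapOp d * tensorOp A B) ↔ A * B = B * A := by
  constructor
  · intro h
    rcases Nat.eq_zero_or_pos d with hd | hd
    · subst hd
      ext i j
      exact i.elim0
    have h' : ∀ p q : Fin d × Fin d × Fin d,
        (A * A) p.2.2 q.1 * ((A * B) p.2.1 q.2.1 * (B * B) p.1 q.2.2) =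
        (A * A) p.2.2 q.1 * ((B * A) p.2.1 q.2.1 * (B * B) p.1 q.2.2) := by
      intro p q
      rw [← lhs_entry, ← rhs_entry, h]
    obtain ⟨a, ha⟩ := exists_ne_zero_row (A * A) (mul_mem hA hA) ⟨0, hd⟩
    obtain ⟨c, hc⟩ := exists_ne_zero_row (B * B) (mul_mem hB hB) ⟨0, hd⟩
    ext j b
    have := h' (⟨0, hd⟩, j, ⟨0, hd⟩) (a, b, c)
    have h2 := mul_left_cancel₀ ha this
    exact mul_right_cancel₀ hc h2
  · intro h
    unfold YangBaxter
    ext p q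
    rw [lhs_entry, rhs_entry, h]
end
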